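/- Let X be the n×n lower triangular ones matrix and let γ select columns at positions 1 = t_1 < t_2 < … < t_K ≤ n, giving the n×K matrix X_γ. Then the K×K Gram matrix X_γ' X_γ has entries (X_γ' X_γ)_{kl} = n + 1 − max(t_k, t_l), and its determinant equals ∏_{k=1}^{K} (t_{k+1} − t_k) with the convention t_{K+1} = n + 1. In particular X_γ' X_γ is invertible. -/

import Mathlib

open Matrix Finset

/-!
Entry `(k, l)` of `X_γᵀ X_γ` counts the rows `i ≥ max t_k t_l`, i.e. it is
`c (max k l)` with `c j = n - t_j` and `c K = 0`. Any matrix of the form `c (max k l)` factors as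
`U D Uᵀ`, where `U` is the upper triangular ones matrix and `D = diag (c k - c (k + 1))`
(telescoping), so its determinant is the product of the gaps `t_{k+1} - t_k`, all positive.
-/

theorem transpose_mul_self_apply_of_step {R ι : Type*} [NonAssocSemiring R] {n : ℕ}
    (t : ι → Fin n) (X : Matrix (Fin n) ι R) (hX : ∀ i k, X i k = if t k ≤ i then 1 else 0)
    (k l : ι) : (Xᵀ * X) k l = ((n - max (t k : ℕ) (t l) : ℕ) : R) := by
  have hprod (i : Fin n) : Xᵀ k i * X i l = if max (t k) (t l) ≤ i then 1 else 0 := by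
    simp only [transpose_apply, hX, max_le_iff, ite_zero_mul_ite_zero, mul_one]
  rw [mul_apply, sum_congr rfl fun i _ => hprod i, sum_boole, filter_le_eq_Ici, Fin.card_Ici,
    Fin.coe_max]

def upperOnes (ι R : Type*) [LE ι] [DecidableLE ι] [Zero R] [One R] : Matrix ι ι R :=
  of fun i j => if i ≤ j then 1 else 0

section UpperOnes

variable {ι R : Type*} [LinearOrder ι]

theorem upperOnes_isUpperTriangular [Zero R] [One R] : (upperOnes ι R).IsUpperTriangular :=
  fun _ _ hij => if_neg (not_le.mpr hij)

variable [Fintype ι]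

theorem det_upperOnes [CommRing R] : (upperOnes ι R).det = 1 := by
  rw [det_of_isUpperTriangular upperOnes_isUpperTriangular]
  simp [upperOnes]

theorem upperOnes_mul_diagonal_mul_transpose_apply [NonAssocSemiring R] (d : ι → R) (k l : ι) :
    (upperOnes ι R * diagonal d * (upperOnes ι R)ᵀ) k l = ∑ j with max k l ≤ j, d j := by
  rw [mul_apply, max_comm]
  simp only [mul_diagonal, transpose_apply, upperOnes, of_apply, sum_filter,
    max_le_iff, ite_mul, one_mul, zero_mul, mul_ite, mul_one, mul_zero, ite_and]

theorem det_upperOnes_mul_diagonal_mul_transpose [CommRing R] (d : ι → R) :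
    (upperOnes ι R * diagonal d * (upperOnes ι R)ᵀ).det = ∏ j, d j := by
  rw [det_mul, det_mul, det_transpose, det_upperOnes, det_diagonal, one_mul, mul_one]

end UpperOnes

theorem sum_filter_le_sub_succ {R : Type*} [AddCommGroup R] {K : ℕ} (c : ℕ → R) (hc : c K = 0)
    (m : Fin K) : ∑ j : Fin K with m ≤ j, (c j - c (j + 1)) = c m := by
  simp_rw [sum_filter, Fin.le_iff_val_le_val]
  rw [Fin.sum_univ_eq_sum_range (fun j => if (m : ℕ) ≤ j then c j - c (j + 1) else 0),
    ← sum_filter]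
  have hIco : {j ∈ range K | (m : ℕ) ≤ j} = Ico (m : ℕ) K := by ext; simp; omega
  rw [hIco, ← neg_inj, ← sum_neg_distrib]
  simp_rw [neg_sub]
  rw [sum_Ico_sub c m.is_lt.le, hc, zero_sub]

theorem det_of_max_eq_prod {R : Type*} [CommRing R] {K : ℕ} (c : ℕ → R) (hc : c K = 0) :
    (of fun k l : Fin K => c (max k l)).det = ∏ k : Fin K, (c k - c (k + 1)) := by
  have hfactor : (of fun k l : Fin K => c (max k l)) =
      upperOnes (Fin K) R * diagonal (fun k : Fin K => c k - c (k + 1)) * (upperOnes (Fin K) R)ᵀ := by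
    ext k l
    rw [upperOnes_mul_diagonal_mul_transpose_apply, sum_filter_le_sub_succ c hc, of_apply, Fin.coe_max]
  rw [hfactor, det_upperOnes_mul_diagonal_mul_transpose]

section PaddedPositions

variable {K n : ℕ}

-- Zero-based, so the paper's convention `t_{K+1} = n + 1` becomes padding by `n`.
def paddedPositions (t : Fin K → Fin n) (j : ℕ) : ℕ :=
  if h : j < K then t ⟨j, h⟩ else n

theorem paddedPositions_of_lt (t : Fin K → Fin n) {j : ℕ} (h : j < K) :
    paddedPositions t j = t ⟨j, h⟩ :=
  dif_pos h

theorem paddedPositions_of_le (t : Fin K → Fin n) {j : ℕ} (h : K ≤ j) :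
    paddedPositions t j = n :=
  dif_neg (not_lt.mpr h)

theorem paddedPositions_le (t : Fin K → Fin n) (j : ℕ) : paddedPositions t j ≤ n := by
  unfold paddedPositions
  split_ifs
  exacts [(t _).is_lt.le, le_rfl]

theorem paddedPositions_lt_succ {t : Fin K → Fin n} (ht : StrictMono t) {j : ℕ} (h : j < K) :
    paddedPositions t j < paddedPositions t (j + 1) := by
  rw [paddedPositions_of_lt t h]
  by_cases h' : j + 1 < K
  · rw [paddedPositions_of_lt t h']
    exact ht (Fin.mk_lt_mk.mpr j.lt_succ_self)
  · rw [paddedPositions_of_le t (not_lt.mp h')]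
    exact (t _).is_lt

theorem monotone_paddedPositions {t : Fin K → Fin n} (ht : StrictMono t) :
    Monotone (paddedPositions t) := by
  refine monotone_nat_of_le_succ fun j => ?_
  by_cases h : j < K
  · exact (paddedPositions_lt_succ ht h).le
  · rw [paddedPositions_of_le t (not_lt.mp h), paddedPositions_of_le t (by omega)]

end PaddedPositions

theorem stmt_3_general (n K : ℕ)
    (t : Fin K → Fin n) (hmono : StrictMono t)
    (Xγ : Matrix (Fin n) (Fin K) ℝ)
    (hXγ : ∀ i k, Xγ i k = if t k ≤ i then 1 else 0) :
    (∀ k l, (Xγᵀ * Xγ) k l = ((n - max ((t k) : ℕ) ((t l) : ℕ) : ℕ) : ℝ)) ∧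
    (Xγᵀ * Xγ).det =
      ((∏ k : Fin K,
        ((if h : (k : ℕ) + 1 < K then ((t ⟨(k : ℕ) + 1, h⟩ : Fin n) : ℕ) else n)
          - ((t k) : ℕ)) : ℕ) : ℝ) ∧
    IsUnit (Xγᵀ * Xγ) := by
  have hentry := transpose_mul_self_apply_of_step t Xγ hXγ
  have hpos (k : Fin K) : paddedPositions t k = t k := paddedPositions_of_lt t k.is_lt
  have hgap (k : Fin K) : t k < paddedPositions t (k + 1) :=
    hpos k ▸ paddedPositions_lt_succ hmono k.is_lt
  set c : ℕ → ℝ := fun j => ((n - paddedPositions t j : ℕ) : ℝ)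
  have hgram : Xγᵀ * Xγ = of fun k l : Fin K => c (max k l) := by
    ext k l
    rw [hentry, of_apply]
    simp only [c]
    rw [(monotone_paddedPositions hmono).map_max, hpos, hpos]
  have hdiff (k : Fin K) : c k - c (k + 1) = ((paddedPositions t (k + 1) - t k : ℕ) : ℝ) := by
    have hle := paddedPositions_le t (k + 1)
    simp only [c]
    rw [hpos, Nat.cast_sub (by omega), Nat.cast_sub hle, Nat.cast_sub (hgap k).le]
    ring
  have hdet : (Xγᵀ * Xγ).det = ((∏ k : Fin K, (paddedPositions t (k + 1) - t k) : ℕ) : ℝ) := by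
    rw [hgram, det_of_max_eq_prod c (by simp [c, paddedPositions_of_le]), Nat.cast_prod]
    exact prod_congr rfl fun k _ => hdiff k
  refine ⟨hentry, hdet, ?_⟩
  rw [isUnit_iff_isUnit_det, hdet, isUnit_iff_ne_zero, Nat.cast_ne_zero, prod_ne_zero_iff]
  exact fun k _ => Nat.sub_ne_zero_of_lt (hgap k)

/-- For columns t_1 < … < t_K (t_1 = 1) of the lower triangular ones matrix,
the Gram matrix X_γ'X_γ has entries n+1−max(t_k,t_l) (in 1-based indexing),
determinant ∏ (t_{k+1} − t_k) with t_{K+1} = n+1, and is invertible. -/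
theorem stmt_3 (n K : ℕ) (hn : 0 < n) (hK : 0 < K)
    (t : Fin K → Fin n) (hmono : StrictMono t) (ht1 : t ⟨0, hK⟩ = ⟨0, hn⟩)
    (Xγ : Matrix (Fin n) (Fin K) ℝ)
    (hXγ : ∀ i k, Xγ i k = if t k ≤ i then 1 else 0) :
    (∀ k l, (Xγᵀ * Xγ) k l = ((n - max ((t k) : ℕ) ((t l) : ℕ) : ℕ) : ℝ)) ∧
    (Xγᵀ * Xγ).det =
      ((∏ k : Fin K,
        ((if h : (k : ℕ) + 1 < K then ((t ⟨(k : ℕ) + 1, h⟩ : Fin n) : ℕ) else n)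
          - ((t k) : ℕ)) : ℕ) : ℝ) ∧
    IsUnit (Xγᵀ * Xγ) :=
  stmt_3_general n K t hmono Xγ hXγ
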